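/- Let x be an ordinal with Cantor normal form leading term ω^α·n (i.e., ω^α·n ≤ x < ω^α·(n+1)) where n ≥ 1 is a natural number, and let y, z be ordinals with x ≤ y ⊕ z and z < ω^α, where ⊕ is the natural sum. Then ω^α·n ≤ y. -/

import Mathlib

universe u

namespace Ordinal

noncomputable def nadd : Ordinal.{u} → Ordinal.{u} → Ordinal.{u}
  | a, b =>
    max (blsub.{u, u} a fun a' _ => nadd a' b) (blsub.{u, u} b fun b' _ => nadd a b')
termination_by o₁ o₂ => (o₁, o₂)

end Ordinal

namespace NaturalOps

infixl:65 " ♯ " => Ordinal.nadd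

end NaturalOps

/-! Write `y = ω ^ α * m + r` with `m : ℕ` and `r < ω ^ α`. A summand below `ω ^ α` only
touches the tail: if `b` is closed under `♯` and `r, s < b`, then
`(b * m + r) ♯ (b * k + s) ≤ b * (m + k) + (r ♯ s)`, by induction on the pair of arguments,
comparing the smaller options lexicographically by (coefficient, tail). The powers `ω ^ α` are
closed under `♯`, by induction on `α` through this very bound at the exponent `log ω (max r s)`.
Hence `y < ω ^ α * n` forces `y ♯ z < ω ^ α * m + ω ^ α ≤ ω ^ α * n`. -/

open Ordinal NaturalOps Order

namespace Ordinal

set_option linter.deprecated false in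
theorem nadd_le_iff {a b c : Ordinal.{u}} :
    b ♯ c ≤ a ↔ (∀ b' < b, b' ♯ c < a) ∧ ∀ c' < c, b ♯ c' < a := by
  rw [nadd]
  simp [blsub_le_iff]

theorem nadd_lt_nadd_left {b c : Ordinal.{u}} (h : b < c) (a : Ordinal.{u}) : a ♯ b < a ♯ c :=
  not_le.1 fun hle => (nadd_le_iff.1 hle).2 b h |>.false

theorem nadd_lt_nadd_right {b c : Ordinal.{u}} (h : b < c) (a : Ordinal.{u}) : b ♯ a < c ♯ a :=
  not_le.1 fun hle => (nadd_le_iff.1 hle).1 b h |>.false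

theorem zero_nadd_zero : (0 : Ordinal.{u}) ♯ 0 = 0 :=
  nonpos_iff_eq_zero.1 <| nadd_le_iff.2 ⟨by simp, by simp⟩

theorem mul_add_lt_mul_add {b p p' t t' : Ordinal} (ht' : t' < b)
    (h : p' < p ∨ p' = p ∧ t' < t) : b * p' + t' < b * p + t := by
  rcases h with hp | ⟨rfl, ht⟩
  · calc b * p' + t' < b * p' + b := add_lt_add_right ht' _
      _ = b * succ p' := (mul_succ b p').symm
      _ ≤ b * p := mul_le_mul_right (succ_le_of_lt hp) b
      _ ≤ b * p + t := le_self_add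
  · exact add_lt_add_right ht _

theorem exists_nat_mul_add_of_lt_mul {a b c : Ordinal} (ha : a < b * c) (hc : c ≤ ω) :
    ∃ m : ℕ, ∃ r < b, a = b * m + r ∧ (m : Ordinal) < c := by
  have hb : b ≠ 0 := by rintro rfl; simp at ha
  have hq : a / b < c := (lt_mul_iff_div_lt hb).1 ha
  obtain ⟨m, hm⟩ := lt_omega0.1 (hq.trans_le hc)
  exact ⟨m, a % b, mod_lt a hb, by rw [← hm, div_add_mod], hm ▸ hq⟩

theorem exists_lex_lt_of_lt_mul_add {a b r : Ordinal} {m : ℕ} (hr : r < b) (ha : a < b * m + r) :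
    ∃ m' : ℕ, ∃ r' < b, a = b * m' + r' ∧ (m' < m ∨ m' = m ∧ r' < r) := by
  have hab : a < b * succ (m : Ordinal) :=
    (mul_succ b m).symm ▸ ha.trans (add_lt_add_right hr _)
  obtain ⟨m', r', hr', rfl, hm'⟩ :=
    exists_nat_mul_add_of_lt_mul hab (succ_le_of_lt (natCast_lt_omega0 m))
  refine ⟨m', r', hr', rfl, ?_⟩
  rw [lt_succ_iff, Nat.cast_le] at hm'
  rcases hm'.lt_or_eq with hlt | rfl
  · exact .inl hlt
  · exact .inr ⟨rfl, (add_lt_add_iff_left _).1 ha⟩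

theorem nadd_le_mul_add_nadd {b : Ordinal.{u}} (hb : IsPrincipal (· ♯ ·) b)
    {a c r s : Ordinal.{u}} {m k : ℕ} (hr : r < b) (hs : s < b) (ha : a ≤ b * m + r) (hc : c ≤ b * k + s) :
    a ♯ c ≤ b * ↑(m + k) + (r ♯ s) := by
  refine nadd_le_iff.2 ⟨fun a' ha' => ?_, fun c' hc' => ?_⟩
  · obtain ⟨m', r', hr', rfl, hlex⟩ := exists_lex_lt_of_lt_mul_add hr (ha'.trans_le ha)
    calc (b * m' + r') ♯ c ≤ b * ↑(m' + k) + (r' ♯ s) :=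
          nadd_le_mul_add_nadd hb hr' hs le_rfl hc
      _ < b * ↑(m + k) + (r ♯ s) := by
        refine mul_add_lt_mul_add (hb hr' hs) ?_
        rcases hlex with hm | ⟨rfl, hr'r⟩
        · exact .inl (by exact_mod_cast Nat.add_lt_add_right hm k)
        · exact .inr ⟨rfl, nadd_lt_nadd_right hr'r s⟩
  · obtain ⟨k', s', hs', rfl, hlex⟩ := exists_lex_lt_of_lt_mul_add hs (hc'.trans_le hc)
    calc a ♯ (b * k' + s') ≤ b * ↑(m + k') + (r ♯ s') :=
          nadd_le_mul_add_nadd hb hr hs' ha le_rfl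
      _ < b * ↑(m + k) + (r ♯ s) := by
        refine mul_add_lt_mul_add (hb hr hs') ?_
        rcases hlex with hk | ⟨rfl, hs's⟩
        · exact .inl (by exact_mod_cast Nat.add_lt_add_left hk m)
        · exact .inr ⟨rfl, nadd_lt_nadd_left hs's r⟩
termination_by (a, c)

theorem isPrincipal_nadd_omega0_opow (α : Ordinal.{u}) : IsPrincipal (· ♯ ·) (ω ^ α) := by
  induction α using WellFoundedLT.induction with | _ α IH => ?_
  intro r s hr hs
  show r ♯ s < ω ^ α
  rcases eq_or_ne α 0 with rfl | hα
  · rw [opow_zero, lt_one_iff] at hr hs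
    rw [hr, hs, zero_nadd_zero, opow_zero]
    exact zero_lt_one
  obtain ⟨γ, hγ, hmax⟩ : ∃ γ < α, max r s < ω ^ γ * ω :=
    ⟨log ω (max r s), (lt_opow_iff_log_lt' one_lt_omega0 hα).1 (max_lt hr hs),
      opow_succ ω _ ▸ lt_opow_succ_log_self one_lt_omega0 _⟩
  obtain ⟨m, r₀, hr₀, rfl, -⟩ :=
    exists_nat_mul_add_of_lt_mul ((le_max_left r s).trans_lt hmax) le_rfl
  obtain ⟨k, s₀, hs₀, rfl, -⟩ :=
    exists_nat_mul_add_of_lt_mul ((le_max_right _ s).trans_lt hmax) le_rfl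
  calc _ ≤ ω ^ γ * ↑(m + k) + (r₀ ♯ s₀) :=
        nadd_le_mul_add_nadd (IH γ hγ) hr₀ hs₀ le_rfl le_rfl
    _ < ω ^ γ * ω + 0 := mul_add_lt_mul_add (IH γ hγ hr₀ hs₀) (.inl (natCast_lt_omega0 _))
    _ = ω ^ succ γ := by rw [add_zero, opow_succ]
    _ ≤ ω ^ α := opow_le_opow_right omega0_pos (succ_le_of_lt hγ)

end Ordinal

theorem leading_term_le_of_le_nadd_general (α : Ordinal) (n : ℕ)
    (x y z : Ordinal)
    (hx₁ : ω ^ α * (n : Ordinal) ≤ x)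
    (hxyz : x ≤ y ♯ z) (hz : z < ω ^ α) :
    ω ^ α * (n : Ordinal) ≤ y := by
  by_contra! hy
  have hα := isPrincipal_nadd_omega0_opow α
  obtain ⟨m, r, hr, rfl, hm⟩ :=
    exists_nat_mul_add_of_lt_mul hy (natCast_lt_omega0 n).le
  have hyz : (ω ^ α * m + r) ♯ z < ω ^ α * n :=
    calc (ω ^ α * m + r) ♯ z ≤ ω ^ α * ↑(m + 0) + (r ♯ z) :=
          nadd_le_mul_add_nadd hα hr hz le_rfl (by simp)
      _ < ω ^ α * n + 0 := mul_add_lt_mul_add (hα hr hz) (.inl hm)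
      _ = ω ^ α * n := add_zero _
  exact hyz.not_ge (hx₁.trans hxyz)

theorem leading_term_le_of_le_nadd (α : Ordinal) (n : ℕ) (hn : 1 ≤ n)
    (x y z : Ordinal)
    (hx₁ : ω ^ α * (n : Ordinal) ≤ x) (hx₂ : x < ω ^ α * ((n : Ordinal) + 1))
    (hxyz : x ≤ y ♯ z) (hz : z < ω ^ α) :
    ω ^ α * (n : Ordinal) ≤ y :=
  leading_term_le_of_le_nadd_general α n x y z hx₁ hxyz hz
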